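/- arXiv:1409.3797 — 3 statements merged into one kernel-verified Lean document; each statement's English description precedes it below -/
import Mathlib

section
/- Let $p$ be a prime and $\chi$ a nontrivial multiplicative character modulo $p$. Then for all $m, n \in \mathbb{F}_p$, $g_\chi \cdot \mathfrak{S}_\chi(m,n) = \sum_{x_1 \in \mathbb{F}_p^{\star}} \sum_{x_2 \in \mathbb{F}_p^{\star}} \chi(x_1)\chi(x_2)\, e\big((n x_1 + m x_2 + x_1 x_2)/p\big)$. -/
/-- `e(z) = exp(2πiz)`. -/
noncomputable def e (z : ℝ) : ℂ := Complex.exp (2 * Real.pi * Complex.I * z)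

/-- The character sum `𝔖_χ(m,n) = ∑_{x ∈ 𝔽_p*} χ(x) χ̄(m+x) e(nx/p)`; since `χ(0) = 0`
for a multiplicative character, the sum may be taken over all of `ZMod p`. -/
noncomputable def frakS (p : ℕ) [NeZero p] (χ : MulChar (ZMod p) ℂ) (m n : ZMod p) : ℂ :=
  ∑ x : ZMod p, χ x * (starRingEnd ℂ) (χ (m + x)) * e (((n.val * x.val : ℕ) : ℝ) / p)

/-- The Gauss sum `g_χ = ∑_{a ∈ 𝔽_p*} χ(a) e(a/p)` (again `χ(0) = 0`). -/
noncomputable def gaussSumE (p : ℕ) [NeZero p] (χ : MulChar (ZMod p) ℂ) : ℂ :=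
  ∑ a : ZMod p, χ a * e ((a.val : ℝ) / p)

/-!
Write `ψ(a) = e(a/p)`, an additive character of `𝔽_p`, so that `χ̄ = χ⁻¹` and `g_χ = ∑ χ(a) ψ(a)`.
In the double sum, `ψ(n x₁ + m x₂ + x₁ x₂) = ψ(n x₁) ψ((m + x₁) x₂)`, so the inner sum over `x₂`
is the Gauss sum of `χ` with `ψ` dilated by `m + x₁`; that equals `χ⁻¹(m + x₁) g_χ`, also when
`m + x₁ = 0`, where both sides vanish because `χ` is nontrivial.
-/

lemma e_natCast_div_eq_stdAddChar (N : ℕ) [NeZero N] (k : ℕ) :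
    e ((k : ℝ) / N) = ZMod.stdAddChar (k : ZMod N) := by
  rw [ZMod.stdAddChar_apply, ZMod.toCircle_natCast, e]
  push_cast
  ring_nf

section FiniteField

variable {F R : Type*} [Field F] [Fintype F] [CommRing R] [IsDomain R]

lemma gaussSum_mulShift_eq_of_ne_one {χ : MulChar F R} (hχ : χ ≠ 1) (ψ : AddChar F R) (y : F) :
    gaussSum χ (ψ.mulShift y) = χ⁻¹ y * gaussSum χ ψ := by
  rcases eq_or_ne y 0 with rfl | hy
  · rw [AddChar.mulShift_zero, gaussSum_one_right hχ, MulChar.map_zero, zero_mul]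
  · exact gaussSum_mulShift_eq χ ψ (Units.mk0 y hy)

theorem gaussSum_mul_sum_mul_inv_shift {χ : MulChar F R} (hχ : χ ≠ 1) (ψ : AddChar F R)
    (m n : F) :
    gaussSum χ ψ * ∑ x, χ x * χ⁻¹ (m + x) * ψ (n * x) =
      ∑ x₁, ∑ x₂, χ x₁ * χ x₂ * ψ (n * x₁ + m * x₂ + x₁ * x₂) := by
  have inner (x₁ : F) : ∑ x₂, χ x₁ * χ x₂ * ψ (n * x₁ + m * x₂ + x₁ * x₂) =
      χ x₁ * ψ (n * x₁) * gaussSum χ (ψ.mulShift (m + x₁)) := by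
    simp only [gaussSum, AddChar.mulShift_apply, Finset.mul_sum]
    refine Finset.sum_congr rfl fun x₂ _ ↦ ?_
    rw [show n * x₁ + m * x₂ + x₁ * x₂ = n * x₁ + (m + x₁) * x₂ by ring, AddChar.map_add_eq_mul]
    ring
  simp only [inner, gaussSum_mulShift_eq_of_ne_one hχ, Finset.mul_sum]
  exact Finset.sum_congr rfl fun x _ ↦ by ring

end FiniteField

/-- For `p` prime and `χ` a nontrivial multiplicative character mod `p`,
`g_χ · 𝔖_χ(m,n) = ∑_{x₁,x₂ ∈ 𝔽_p*} χ(x₁)χ(x₂) e((n x₁ + m x₂ + x₁x₂)/p)`. -/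
theorem gauss_mul_frakS (p : ℕ) [Fact p.Prime] (χ : MulChar (ZMod p) ℂ) (hχ : χ ≠ 1)
    (m n : ZMod p) :
    gaussSumE p χ * frakS p χ m n =
      ∑ x₁ : ZMod p, ∑ x₂ : ZMod p, χ x₁ * χ x₂ *
        e (((n.val * x₁.val + m.val * x₂.val + x₁.val * x₂.val : ℕ) : ℝ) / p) := by
  have hg : gaussSumE p χ = gaussSum χ ZMod.stdAddChar := by
    simp only [gaussSumE, gaussSum, e_natCast_div_eq_stdAddChar, ZMod.natCast_zmod_val]
  simp only [hg, frakS, starRingEnd_apply, MulChar.star_apply', e_natCast_div_eq_stdAddChar]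
  simp only [Nat.cast_add, Nat.cast_mul, ZMod.natCast_zmod_val]
  exact gaussSum_mul_sum_mul_inv_shift hχ _ m n
end

section
/- Let $Q > 1$, $c \in \mathbb{R}$, and let $h : (0,\infty) \times \mathbb{R} \to \mathbb{R}$ be a function that vanishes whenever its first argument exceeds $\max\{1, 2|y|\}$ (where $y$ is the second argument). Suppose that for every integer $n$, $\delta(n,0) = \frac{c}{Q^2} \sum_{q=1}^{\infty} \sideset{}{^{\star}}\sum_{a \bmod q} e\big(\tfrac{an}{q}\big)\, h\big(\tfrac{q}{Q}, \tfrac{n}{Q^2}\big)$ (the sum over $q$ having only finitely many nonzero terms by the support condition). Then for every positive integer $K$ and every integer $n$, $\delta(n,0) = \frac{c}{K Q^2} \sum_{q=1}^{\infty} \sideset{}{^{\star}}\sum_{a \bmod q} \sum_{b \bmod K} e\big(\tfrac{an}{qK}\big)\, e\big(\tfrac{bn}{K}\big)\, h\big(\tfrac{q}{Q}, \tfrac{n}{KQ^2}\big)$. -/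
/-- `δ(n,0)`: equal to `1` if `n = 0` and `0` otherwise. -/
def deltaSymbol (n : ℤ) : ℂ := if n = 0 then 1 else 0

/-!
Inserting the sum over `b mod K` costs nothing: by orthogonality of additive characters it equals
`K` when `K ∣ n` and `0` otherwise. If `K ∤ n`, then `n ≠ 0` and both sides vanish. If `n = K m`,
the `K` cancels the extra `1/K`, the arguments `an/(qK)` and `n/(KQ²)` become `am/q` and `m/Q²`,
and the right-hand side is the assumed expansion of `δ(m,0) = δ(n,0)`.
-/

open Finset

theorem geom_sum_eq_ite_of_pow_eq_one {F : Type*} [Field F] [DecidableEq F] {x : F} {n : ℕ}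
    (hx : x ^ n = 1) : ∑ i ∈ range n, x ^ i = if x = 1 then (n : F) else 0 := by
  split_ifs with h1
  · simp [h1]
  · rw [geom_sum_eq h1, hx, sub_self, zero_div]

theorem e_nat_mul (b : ℕ) (x : ℝ) : e (b * x) = e x ^ b := by
  rw [e, e, ← Complex.exp_nat_mul]
  push_cast
  ring_nf

theorem e_eq_one_iff (x : ℝ) : e x = 1 ↔ ∃ k : ℤ, x = k := by
  rw [e, Complex.exp_eq_one_iff]
  refine exists_congr fun k => ?_
  rw [mul_comm, mul_left_inj' (by simp [Real.pi_ne_zero]), ← Complex.ofReal_intCast,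
    Complex.ofReal_inj]

theorem e_intCast (k : ℤ) : e k = 1 := (e_eq_one_iff _).2 ⟨k, rfl⟩

theorem sum_range_e_mul_div {K : ℕ} (hK : K ≠ 0) (n : ℤ) :
    ∑ b ∈ range K, e (b * n / K) = if (K : ℤ) ∣ n then (K : ℂ) else 0 := by
  have hK : (K : ℝ) ≠ 0 := Nat.cast_ne_zero.2 hK
  have hpow (b : ℕ) : e (b * n / K) = e (n / K) ^ b := by rw [mul_div_assoc, e_nat_mul]
  have hroot : e (n / K) ^ K = 1 := by rw [← hpow, mul_div_cancel_left₀ _ hK, e_intCast]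
  have hone : e (n / K) = 1 ↔ (K : ℤ) ∣ n := by
    rw [e_eq_one_iff, show (K : ℤ) ∣ n ↔ ∃ k : ℤ, n = K * k from Iff.rfl]
    refine exists_congr fun k => ?_
    rw [div_eq_iff hK, mul_comm]
    exact_mod_cast Iff.rfl
  simp_rw [hpow, geom_sum_eq_ite_of_pow_eq_one hroot, hone]

theorem deltaSymbol_mul {K : ℤ} (hK : K ≠ 0) (m : ℤ) : deltaSymbol (K * m) = deltaSymbol m := by
  simp [deltaSymbol, hK]

theorem delta_symbol_modified_general (Q : ℝ) (c : ℝ) (h : ℝ → ℝ → ℝ)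
    (hyp : ∀ n : ℤ, deltaSymbol n =
      (c / Q ^ 2) * ∑' q : ℕ+, ∑ a ∈ (Finset.range (q : ℕ)).filter (fun a => a.Coprime q),
        e ((a : ℝ) * n / q) * (h ((q : ℝ) / Q) ((n : ℝ) / Q ^ 2) : ℂ)) :
    ∀ (K : ℕ+) (n : ℤ), deltaSymbol n =
      (c / ((K : ℝ) * Q ^ 2)) * ∑' q : ℕ+,
        ∑ a ∈ (Finset.range (q : ℕ)).filter (fun a => a.Coprime q),
          ∑ b ∈ Finset.range (K : ℕ),
            e ((a : ℝ) * n / ((q : ℝ) * K)) * e ((b : ℝ) * n / K) *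
              (h ((q : ℝ) / Q) ((n : ℝ) / ((K : ℝ) * Q ^ 2)) : ℂ) := by
  intro K n
  have hK : (K : ℝ) ≠ 0 := by positivity
  simp_rw [mul_right_comm _ (e _), ← mul_sum, sum_range_e_mul_div K.ne_zero]
  split_ifs with hKn
  · obtain ⟨m, rfl⟩ := hKn
    rw [deltaSymbol_mul (by positivity : (K : ℤ) ≠ 0)]
    have harg (q : ℕ+) (a : ℕ) : (a : ℝ) * (K * m : ℤ) / (q * K) = a * m / q := by
      push_cast
      rw [mul_left_comm, mul_comm (q : ℝ), mul_div_mul_left _ _ hK]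
    have hscale : ((K * m : ℤ) : ℝ) / (K * Q ^ 2) = m / Q ^ 2 := by
      push_cast
      exact mul_div_mul_left _ _ hK
    rw [hyp m]
    simp_rw [harg, hscale, ← sum_mul, tsum_mul_right]
    rw [mul_comm _ ((K : ℕ) : ℂ), ← mul_assoc]
    congr 1
    push_cast
    field_simp
  · simp [deltaSymbol, show n ≠ 0 by rintro rfl; exact hKn (dvd_zero _)]

/-- Modified δ-symbol identity: if the δ-symbol admits the expansion
`δ(n,0) = (c/Q²) ∑_q ∑*_{a mod q} e(an/q) h(q/Q, n/Q²)` for all integers `n`,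
then for every positive integer `K` and integer `n`,
`δ(n,0) = (c/(KQ²)) ∑_q ∑*_{a mod q} ∑_{b mod K} e(an/(qK)) e(bn/K) h(q/Q, n/(KQ²))`. -/
theorem delta_symbol_modified (Q : ℝ) (hQ : 1 < Q) (c : ℝ) (h : ℝ → ℝ → ℝ)
    (hvanish : ∀ x y : ℝ, max 1 (2 * |y|) < x → h x y = 0)
    (hyp : ∀ n : ℤ, deltaSymbol n =
      (c / Q ^ 2) * ∑' q : ℕ+, ∑ a ∈ (Finset.range (q : ℕ)).filter (fun a => a.Coprime q),
        e ((a : ℝ) * n / q) * (h ((q : ℝ) / Q) ((n : ℝ) / Q ^ 2) : ℂ)) :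
    ∀ (K : ℕ+) (n : ℤ), deltaSymbol n =
      (c / ((K : ℝ) * Q ^ 2)) * ∑' q : ℕ+,
        ∑ a ∈ (Finset.range (q : ℕ)).filter (fun a => a.Coprime q),
          ∑ b ∈ Finset.range (K : ℕ),
            e ((a : ℝ) * n / ((q : ℝ) * K)) * e ((b : ℝ) * n / K) *
              (h ((q : ℝ) / Q) ((n : ℝ) / ((K : ℝ) * Q ^ 2)) : ℂ) :=
  delta_symbol_modified_general Q c h hyp
end

section
/- Let $M_1, M_2, M_3$ be distinct primes and $\chi_1$ a nontrivial multiplicative character modulo $M_1$. Let $q_1, q_2$ be positive integers coprime to $M_1 M_3$, let $m_1, m_2$ be integers, and let $\bar{M}_3$ denote an inverse of $M_3$ modulo $q_1 q_2$. Define $\mathfrak{C}(m_1, m_2, 0; q_1, q_2) = \sum_{\substack{a \bmod q_1 q_2 M_1 \\ a \equiv -M_2\bar{M}_3 m_1 \bmod q_1,\ a \equiv -M_2\bar{M}_3 m_2 \bmod q_2}} \bar{\chi}_1(M_2 m_1 + M_3 a)\, \chi_1(M_2 m_2 + M_3 a)$. Then $|\mathfrak{C}(m_1, m_2, 0; q_1,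 q_2)| \le \gcd(q_1, q_2) \cdot \gcd(m_1 - m_2, M_1)$. -/
open scoped Classical in
/-- The character sum `𝔠(m₁, m₂, n; q₁, q₂)`: the sum over residues `a mod q₁q₂M₁` with
`a ≡ -M₂M̄₃m₁ (mod q₁)` and `a ≡ -M₂M̄₃m₂ (mod q₂)` of
`χ̄₁(M₂m₁ + M₃a) χ₁(M₂m₂ + M₃a) e(na/(q₁q₂M₁))`. -/
noncomputable def frakC (M₁ M₂ M₃ q₁ q₂ : ℕ) (χ₁ : MulChar (ZMod M₁) ℂ)
    (M₃bar m₁ m₂ n : ℤ) : ℂ :=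
  ∑ a ∈ (Finset.range (q₁ * q₂ * M₁)).filter
      (fun a => ((a : ℤ) ≡ -((M₂ : ℤ) * M₃bar * m₁) [ZMOD (q₁ : ℤ)]) ∧
                ((a : ℤ) ≡ -((M₂ : ℤ) * M₃bar * m₂) [ZMOD (q₂ : ℤ)])),
    (starRingEnd ℂ) (χ₁ (((M₂ : ℤ) * m₁ + (M₃ : ℤ) * a : ℤ) : ZMod M₁)) *
      χ₁ (((M₂ : ℤ) * m₂ + (M₃ : ℤ) * a : ℤ) : ZMod M₁) *
      e (((n * a : ℤ) : ℝ) / ((q₁ : ℝ) * q₂ * M₁))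

/-!
Write `a = b + k q₁q₂` with `b < q₁q₂` and `k < M₁`. The congruence conditions only see `b`,
while, `M₃q₁q₂` being invertible mod `M₁`, the residue of `M₃a` runs once over `ZMod M₁` as `k`
does. Hence the sum is the number of admissible `b` times the complete correlation sum
`∑ᵤ χ̄₁(u) χ₁(u + c)` with `c = M₂(m₂ - m₁)`. The admissible `b < q₁q₂ = gcd · lcm` are congruent
mod `lcm(q₁, q₂)`, so there are at most `gcd(q₁, q₂)` of them; the correlation sum equals `-1`
when `M₁ ∤ c` and has at most `M₁` unimodular terms otherwise.
-/

open Finset ComplexConjugate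

section Sums

variable {β : Type*} [AddCommMonoid β]

theorem Finset.sum_range_mul_eq_sum_range_sum_range (g : ℕ → β) (Q M : ℕ) :
    ∑ a ∈ range (Q * M), g a = ∑ b ∈ range Q, ∑ k ∈ range M, g (b + k * Q) := by
  induction M with
  | zero => simp
  | succ M ih =>
    rw [Nat.mul_succ, sum_range_add, ih]
    simp only [sum_range_succ, sum_add_distrib, mul_comm Q M, add_comm (M * Q)]

theorem Finset.sum_filter_range_mul_of_periodic {P : ℕ → Prop} [DecidablePred P] {Q : ℕ}
    (hP : Function.Periodic P Q) (M : ℕ) (g : ℕ → β) {S : β}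
    (hg : ∀ b, ∑ k ∈ range M, g (b + k * Q) = S) :
    ∑ a ∈ (range (Q * M)).filter P, g a = #((range Q).filter P) • S := by
  have hPk : ∀ b k : ℕ, P (b + k * Q) = P b := fun b k => by simpa using hP.nat_mul k b
  rw [sum_filter, sum_range_mul_eq_sum_range_sum_range, card_eq_sum_ones, sum_smul, sum_filter]
  refine sum_congr rfl fun b _ => ?_
  by_cases hb : P b <;> simp [hPk, hb, hg]

theorem ZMod.sum_range_natCast {n : ℕ} [NeZero n] (h : ZMod n → β) :
    ∑ k ∈ range n, h k = ∑ x, h x :=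
  sum_nbij' (↑) ZMod.val (fun _ _ => mem_univ _) (fun x _ => mem_range.2 x.val_lt)
    (fun _ hk => ZMod.val_natCast_of_lt (mem_range.1 hk)) (fun x _ => ZMod.natCast_zmod_val x)
    (fun _ _ => rfl)

theorem ZMod.sum_range_comp_add_mul {n : ℕ} [NeZero n] (f : ZMod n → β) (b : ZMod n)
    {r : ZMod n} (hr : IsUnit r) :
    ∑ k ∈ range n, f (b + k * r) = ∑ x, f x := by
  rw [ZMod.sum_range_natCast (fun x => f (b + x * r))]
  exact Fintype.sum_equiv ((Units.mulRight hr.unit).trans (Equiv.addLeft b)) _ _ fun _ => rfl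

end Sums

theorem Finset.card_le_of_subset_range_mul_of_modEq {s : Finset ℕ} {L g : ℕ}
    (hs : s ⊆ range (L * g)) (hmod : ∀ a ∈ s, ∀ b ∈ s, a ≡ b [MOD L]) : #s ≤ g := by
  calc #s ≤ #(range g) := by
        refine card_le_card_of_injOn (· / L) (fun a ha => mem_range.2 ?_) fun a ha b hb hab => ?_
        · exact Nat.div_lt_of_lt_mul (mem_range.1 (hs ha))
        · rw [← Nat.div_add_mod a L, ← Nat.div_add_mod b L, show a / L = b / L from hab,
            hmod a ha b hb]
    _ = g := card_range g

theorem card_filter_range_modEq_and_modEq_le_gcd (q₁ q₂ : ℕ) (c₁ c₂ : ℤ) :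
    #((range (q₁ * q₂)).filter fun a : ℕ => (a : ℤ) ≡ c₁ [ZMOD q₁] ∧ (a : ℤ) ≡ c₂ [ZMOD q₂])
      ≤ q₁.gcd q₂ := by
  refine card_le_of_subset_range_mul_of_modEq (L := q₁.lcm q₂) ?_ fun a ha b hb => ?_
  · rw [Nat.mul_comm (q₁.lcm q₂), Nat.gcd_mul_lcm]
    exact filter_subset _ _
  · simp only [mem_filter] at ha hb
    have := Int.modEq_and_modEq_iff_modEq_lcm.1
      ⟨ha.2.1.trans hb.2.1.symm, ha.2.2.trans hb.2.2.symm⟩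
    exact Int.natCast_modEq_iff.1 (by simpa using this)

theorem MulChar.sum_inv_mul_add_eq_neg_one {F R : Type*} [Field F] [Fintype F] [CommRing R]
    [IsDomain R] {χ : MulChar F R} (hχ : χ ≠ 1) {c : F} (hc : c ≠ 0) :
    ∑ u, χ⁻¹ u * χ (u + c) = -1 := by
  classical
  -- `χ⁻¹ u * χ (u + c) = χ (1 + c * u⁻¹)` for `u ≠ 0`; with `0⁻¹ = 0` the right side is a
  -- permuted sum of `χ`, off by `χ 1 = 1` at `u = 0`.
  have hpoint : ∀ u, χ⁻¹ u * χ (u + c) = χ (1 + c * u⁻¹) - if u = 0 then 1 else 0 := by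
    intro u
    rcases eq_or_ne u 0 with rfl | hu
    · simp
    · rw [MulChar.inv_apply', ← map_mul, if_neg hu, sub_zero]
      congr 1
      field_simp
  have hbij : Function.Bijective fun u : F => 1 + c * u⁻¹ :=
    Finite.injective_iff_bijective.mp fun x y h =>
      inv_injective (mul_left_cancel₀ hc (add_left_cancel h))
  rw [sum_congr rfl fun u _ => hpoint u, sum_sub_distrib,
    Fintype.sum_bijective _ hbij _ χ fun _ => rfl, MulChar.sum_eq_zero_of_ne_one hχ]
  simp

theorem MulChar.norm_sum_conj_mul_add_le_gcd {p : ℕ} [Fact p.Prime] {χ : MulChar (ZMod p) ℂ}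
    (hχ : χ ≠ 1) (c : ℤ) :
    ‖∑ u : ZMod p, conj (χ u) * χ (u + c)‖ ≤ Int.gcd c p := by
  simp_rw [starRingEnd_apply, MulChar.star_apply']
  by_cases hc : (c : ZMod p) = 0
  · have hgcd : Int.gcd c p = p := by
      exact_mod_cast Int.gcd_eq_right (Int.natCast_nonneg p)
        ((ZMod.intCast_zmod_eq_zero_iff_dvd c p).1 hc)
    calc ‖∑ u : ZMod p, χ⁻¹ u * χ (u + c)‖ ≤ ∑ _u : ZMod p, (1 : ℝ) :=
          norm_sum_le_of_le _ fun u _ => by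
            simpa using mul_le_one₀ (DirichletCharacter.norm_le_one χ⁻¹ u) (norm_nonneg _)
              (DirichletCharacter.norm_le_one χ _)
      _ = Int.gcd c p := by simp [hgcd]
  · rw [MulChar.sum_inv_mul_add_eq_neg_one hχ hc, norm_neg, norm_one, Nat.one_le_cast]
    exact Int.gcd_pos_of_ne_zero_right c (by exact_mod_cast (Fact.out : p.Prime).ne_zero)

theorem frakC_zero_eq_card_smul {M₁ : ℕ} [NeZero M₁] (M₂ M₃ q₁ q₂ : ℕ) (χ₁ : MulChar (ZMod M₁) ℂ)
    (M₃bar m₁ m₂ : ℤ) (hunit : IsUnit ((M₃ * (q₁ * q₂) : ℕ) : ZMod M₁)) :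
    frakC M₁ M₂ M₃ q₁ q₂ χ₁ M₃bar m₁ m₂ 0 =
      #((range (q₁ * q₂)).filter fun a : ℕ => (a : ℤ) ≡ -(M₂ * M₃bar * m₁) [ZMOD q₁] ∧
          (a : ℤ) ≡ -(M₂ * M₃bar * m₂) [ZMOD q₂]) •
        ∑ u : ZMod M₁, conj (χ₁ u) * χ₁ (u + ((M₂ * (m₂ - m₁) : ℤ) : ZMod M₁)) := by
  set A₁ : ZMod M₁ := ((M₂ * m₁ : ℤ) : ZMod M₁)
  set A₂ : ZMod M₁ := ((M₂ * m₂ : ℤ) : ZMod M₁)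
  set f : ZMod M₁ → ℂ := fun x => conj (χ₁ (A₁ + x)) * χ₁ (A₂ + x)
  have hperiodic : Function.Periodic (fun a : ℕ => (a : ℤ) ≡ -(M₂ * M₃bar * m₁) [ZMOD q₁] ∧
      (a : ℤ) ≡ -(M₂ * M₃bar * m₂) [ZMOD q₂]) (q₁ * q₂) := fun a => by
    simp only [Int.ModEq, Nat.cast_add, Nat.cast_mul, Int.add_mul_emod_self_left,
      Int.add_mul_emod_self_right]
  have hfull : ∀ b : ℕ, ∑ k ∈ range M₁, f (((M₃ * (b + k * (q₁ * q₂)) : ℕ) : ZMod M₁)) =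
      ∑ u : ZMod M₁, conj (χ₁ u) * χ₁ (u + ((M₂ * (m₂ - m₁) : ℤ) : ZMod M₁)) := fun b => by
    calc _ = ∑ k ∈ range M₁, f ((M₃ * b : ℕ) + k * ((M₃ * (q₁ * q₂) : ℕ) : ZMod M₁)) :=
          sum_congr rfl fun k _ => congrArg f (by push_cast; ring)
      _ = ∑ x, f x := ZMod.sum_range_comp_add_mul f _ hunit
      _ = _ := Fintype.sum_equiv (Equiv.addLeft A₁) _ _ fun x => by
          simp only [f, A₁, A₂, Equiv.coe_addLeft]; push_cast; ring_nf
  unfold frakC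
  simp only [zero_mul, Int.cast_zero, zero_div, e, Complex.ofReal_zero, mul_zero,
    Complex.exp_zero, mul_one, Finset.pure_def, Finset.bind_def, Finset.sup_singleton_apply,
    filter_image, sum_image fun _ _ _ _ h => Nat.cast_injective h]
  refine (sum_congr rfl fun a _ => ?_).trans
    (sum_filter_range_mul_of_periodic hperiodic M₁ (fun a => f ((M₃ * a : ℕ) : ZMod M₁)) hfull)
  simp only [f, A₁, A₂]
  push_cast
  rfl

theorem frakC_zero_bound_general (M₁ M₂ M₃ : ℕ) [Fact M₁.Prime] [Fact M₂.Prime] [Fact M₃.Prime]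
    (h₁₂ : M₁ ≠ M₂) (h₁₃ : M₁ ≠ M₃)
    (χ₁ : MulChar (ZMod M₁) ℂ) (hχ₁ : χ₁ ≠ 1)
    (q₁ q₂ : ℕ)
    (hcop₁ : Nat.Coprime q₁ (M₁ * M₃)) (hcop₂ : Nat.Coprime q₂ (M₁ * M₃))
    (m₁ m₂ M₃bar : ℤ) :
    ‖frakC M₁ M₂ M₃ q₁ q₂ χ₁ M₃bar m₁ m₂ 0‖ ≤
      (Nat.gcd q₁ q₂ : ℝ) * (Int.gcd (m₁ - m₂) (M₁ : ℤ) : ℝ) := by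
  have hp₁ : M₁.Prime := Fact.out
  have hunit : IsUnit ((M₃ * (q₁ * q₂) : ℕ) : ZMod M₁) := by
    rw [ZMod.isUnit_iff_coprime]
    exact ((Nat.coprime_primes Fact.out hp₁).2 h₁₃.symm).mul_left
      ((hcop₁.coprime_dvd_right (dvd_mul_right M₁ M₃)).mul_left
        (hcop₂.coprime_dvd_right (dvd_mul_right M₁ M₃)))
  have hgcd : Int.gcd (M₂ * (m₂ - m₁)) M₁ = Int.gcd (m₁ - m₂) M₁ := by
    rw [Int.gcd, Int.gcd, Int.natAbs_mul, Int.natAbs_natCast, Int.natAbs_natCast,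
      ((Nat.coprime_primes Fact.out hp₁).2 h₁₂.symm).gcd_mul_left_cancel, ← Int.natAbs_neg,
      neg_sub]
  rw [frakC_zero_eq_card_smul M₂ M₃ q₁ q₂ χ₁ M₃bar m₁ m₂ hunit, nsmul_eq_mul, norm_mul,
    Complex.norm_natCast, ← hgcd]
  exact mul_le_mul (Nat.cast_le.2 (card_filter_range_modEq_and_modEq_le_gcd _ _ _ _))
    (MulChar.norm_sum_conj_mul_add_le_gcd hχ₁ _) (norm_nonneg _) (Nat.cast_nonneg _)

/-- Bound for the zero frequency: `|𝔠(m₁, m₂, 0; q₁, q₂)| ≤ gcd(q₁,q₂) · gcd(m₁ - m₂, M₁)`. -/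
theorem frakC_zero_bound (M₁ M₂ M₃ : ℕ) [Fact M₁.Prime] [Fact M₂.Prime] [Fact M₃.Prime]
    (h₁₂ : M₁ ≠ M₂) (h₁₃ : M₁ ≠ M₃) (h₂₃ : M₂ ≠ M₃)
    (χ₁ : MulChar (ZMod M₁) ℂ) (hχ₁ : χ₁ ≠ 1)
    (q₁ q₂ : ℕ) (hq₁ : 0 < q₁) (hq₂ : 0 < q₂)
    (hcop₁ : Nat.Coprime q₁ (M₁ * M₃)) (hcop₂ : Nat.Coprime q₂ (M₁ * M₃))
    (m₁ m₂ M₃bar : ℤ) (hinv : (M₃ : ℤ) * M₃bar ≡ 1 [ZMOD ((q₁ * q₂ : ℕ) : ℤ)]) :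
    ‖frakC M₁ M₂ M₃ q₁ q₂ χ₁ M₃bar m₁ m₂ 0‖ ≤
      (Nat.gcd q₁ q₂ : ℝ) * (Int.gcd (m₁ - m₂) (M₁ : ℤ) : ℝ) :=
  frakC_zero_bound_general M₁ M₂ M₃ h₁₂ h₁₃ χ₁ hχ₁ q₁ q₂ hcop₁ hcop₂ m₁ m₂ M₃bar
end
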